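/- Let F: ℝᵐ × ℝⁿ → ℝ with ∇F jointly L-Lipschitz, let f(x) = min_y F(x, y) with minimizer y(x) for each x. Suppose the gradient mapping x ↦ ∇_x F(x, y(x)) equals ∇f(x). Then f has L-Lipschitz gradient: ‖∇f(x') - ∇f(x)‖ ≤ L‖x' - x‖ for all x, x'. -/

import Mathlib

/-!
On the L² product, `p ↦ (gx p, gy p)` is an `L`-Lipschitz subgradient field of `F`. Such a field
is `1 / L`-cocoercive (Baillon–Haddad): `‖g q - g p‖² ≤ L ⟪g q - g p, q - p⟫`. This follows by
comparing the subgradient lower bound at `a` with the descent-lemma upper bound at `b`, at the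
point `b - L⁻¹ • (g b - g a)` that minimizes the latter. At the points `(x, y(x))` the
`y`-component of the gradient vanishes and the `x`-component is `∇f(x)`, so
`‖Δ∇f‖² ≤ L ⟪Δ∇f, Δx⟫ ≤ L ‖Δ∇f‖ ‖Δx‖`.
-/

open RealInnerProductSpace

section Subgradient

variable {E : Type*} [NormedAddCommGroup E] [InnerProductSpace ℝ E] {G : E → ℝ} {g : E → E}
  {L : ℝ}

theorem sub_sub_inner_le_of_subgradient_of_lipschitz (hsub : ∀ p q, G p + ⟪g p, q - p⟫ ≤ G q)
    (hlip : ∀ p q, ‖g p - g q‖ ≤ L * ‖p - q‖) (p q : E) :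
    G q - G p - ⟪g p, q - p⟫ ≤ L * ‖q - p‖ ^ 2 :=
  calc G q - G p - ⟪g p, q - p⟫ ≤ ⟪g q - g p, q - p⟫ := by
        have := hsub q p
        rw [inner_sub_left, ← neg_sub q p, inner_neg_right] at *
        linarith
    _ ≤ ‖g q - g p‖ * ‖q - p‖ := real_inner_le_norm _ _
    _ ≤ L * ‖q - p‖ * ‖q - p‖ := by gcongr; exact hlip q p
    _ = L * ‖q - p‖ ^ 2 := by ring

theorem hasFDerivAt_of_subgradient_of_lipschitz (hsub : ∀ p q, G p + ⟪g p, q - p⟫ ≤ G q)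
    (hlip : ∀ p q, ‖g p - g q‖ ≤ L * ‖p - q‖) (p : E) :
    HasFDerivAt G (innerSL ℝ (g p)) p := by
  rw [hasFDerivAt_iff_isLittleO]
  refine (Asymptotics.IsBigO.of_bound L (Filter.Eventually.of_forall fun q => ?_)).trans_isLittleO
    (Asymptotics.isLittleO_pow_sub_sub p one_lt_two)
  have lower := hsub p q
  have upper := sub_sub_inner_le_of_subgradient_of_lipschitz hsub hlip p q
  rw [innerSL_apply_apply, Real.norm_of_nonneg (by linarith), norm_pow, norm_norm]
  exact upper

theorem le_add_inner_add_sq_of_subgradient_of_lipschitz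
    (hsub : ∀ p q, G p + ⟪g p, q - p⟫ ≤ G q) (hlip : ∀ p q, ‖g p - g q‖ ≤ L * ‖p - q‖)
    (p q : E) : G q ≤ G p + ⟪g p, q - p⟫ + L / 2 * ‖q - p‖ ^ 2 := by
  set d := q - p
  let ψ : ℝ → ℝ := fun t => G (p + t • d) - t * ⟪g p, d⟫ - L / 2 * t ^ 2 * ‖d‖ ^ 2
  have hψ : ∀ t, HasDerivAt ψ (⟪g (p + t • d) - g p, d⟫ - L * t * ‖d‖ ^ 2) t := by
    intro t
    have hG := (hasFDerivAt_of_subgradient_of_lipschitz hsub hlip (p + t • d)).comp_hasDerivAt t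
      (((hasDerivAt_id t).smul_const d).const_add p)
    refine ((hG.sub ((hasDerivAt_id t).mul_const ⟪g p, d⟫)).sub
      (((hasDerivAt_pow 2 t).const_mul (L / 2)).mul_const (‖d‖ ^ 2))).congr_deriv ?_
    simp only [innerSL_apply_apply, one_smul, inner_sub_left]
    ring
  have hψ_nonpos : ∀ t ∈ interior (Set.Ici (0 : ℝ)),
      ⟪g (p + t • d) - g p, d⟫ - L * t * ‖d‖ ^ 2 ≤ 0 := by
    intro t ht
    rw [interior_Ici, Set.mem_Ioi] at ht
    have := calc ⟪g (p + t • d) - g p, d⟫ ≤ ‖g (p + t • d) - g p‖ * ‖d‖ := real_inner_le_norm _ _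
      _ ≤ L * ‖t • d‖ * ‖d‖ := by gcongr; simpa using hlip (p + t • d) p
      _ = L * t * ‖d‖ ^ 2 := by rw [norm_smul, Real.norm_of_nonneg ht.le]; ring
    linarith
  have := antitoneOn_of_hasDerivWithinAt_nonpos (convex_Ici 0)
    (fun t _ => (hψ t).continuousAt.continuousWithinAt) (fun t _ => (hψ t).hasDerivWithinAt)
    hψ_nonpos Set.self_mem_Ici (Set.mem_Ici.2 zero_le_one) zero_le_one
  simp only [ψ, zero_smul, add_zero, one_smul, d, add_sub_cancel] at this
  linarith

theorem add_inner_add_sq_le_of_subgradient_of_lipschitz (hL : 0 < L)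
    (hsub : ∀ p q, G p + ⟪g p, q - p⟫ ≤ G q) (hlip : ∀ p q, ‖g p - g q‖ ≤ L * ‖p - q‖)
    (a b : E) : G a + ⟪g a, b - a⟫ + (2 * L)⁻¹ * ‖g b - g a‖ ^ 2 ≤ G b := by
  set w := g b - g a
  set r := b - L⁻¹ • w
  have lower := hsub a r
  have upper := le_add_inner_add_sq_of_subgradient_of_lipschitz hsub hlip b r
  have hra : r - a = (b - a) - L⁻¹ • w := by simp only [r]; abel
  have hrb : r - b = -(L⁻¹ • w) := by simp only [r]; abel
  have hw : L⁻¹ * ⟪g b, w⟫ - L⁻¹ * ⟪g a, w⟫ = L⁻¹ * ‖w‖ ^ 2 := by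
    rw [← mul_sub, ← inner_sub_left, real_inner_self_eq_norm_sq]
  rw [hra, inner_sub_right, real_inner_smul_right] at lower
  rw [hrb, inner_neg_right, real_inner_smul_right, norm_neg, norm_smul,
    Real.norm_of_nonneg (by positivity)] at upper
  have : L / 2 * (L⁻¹ * ‖w‖) ^ 2 = (2 * L)⁻¹ * ‖w‖ ^ 2 := by field_simp
  have : L⁻¹ * ‖w‖ ^ 2 = 2 * ((2 * L)⁻¹ * ‖w‖ ^ 2) := by field_simp
  linarith

theorem sq_norm_sub_le_mul_inner_of_subgradient_of_lipschitz
    (hsub : ∀ p q, G p + ⟪g p, q - p⟫ ≤ G q) (hlip : ∀ p q, ‖g p - g q‖ ≤ L * ‖p - q‖)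
    (p q : E) : ‖g q - g p‖ ^ 2 ≤ L * ⟪g q - g p, q - p⟫ := by
  rcases le_or_gt L 0 with hL | hL
  · have : ‖g q - g p‖ ≤ 0 := (hlip q p).trans (mul_nonpos_of_nonpos_of_nonneg hL (norm_nonneg _))
    rw [norm_le_zero_iff.1 this]
    simp
  have hpq := add_inner_add_sq_le_of_subgradient_of_lipschitz hL hsub hlip p q
  have hqp := add_inner_add_sq_le_of_subgradient_of_lipschitz hL hsub hlip q p
  rw [← norm_neg, neg_sub] at hqp
  have : ⟪g p, q - p⟫ + ⟪g q, p - q⟫ = -⟪g q - g p, q - p⟫ := by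
    rw [← neg_sub q p, inner_neg_right, inner_sub_left]; ring
  have : ‖g q - g p‖ ^ 2 = L * (2 * ((2 * L)⁻¹ * ‖g q - g p‖ ^ 2)) := by field_simp
  nlinarith

end Subgradient

theorem norm_le_mul_norm_of_sq_le_mul_inner {E : Type*} [NormedAddCommGroup E]
    [InnerProductSpace ℝ E] {L : ℝ} (hL : 0 ≤ L) {u v : E} (h : ‖u‖ ^ 2 ≤ L * ⟪u, v⟫) :
    ‖u‖ ≤ L * ‖v‖ := by
  have : ‖u‖ * ‖u‖ ≤ ‖u‖ * (L * ‖v‖) := by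
    nlinarith [real_inner_le_norm u v, mul_le_mul_of_nonneg_left (real_inner_le_norm u v) hL]
  rcases (norm_nonneg u).eq_or_lt with hu | hu
  · rw [← hu]; positivity
  · exact le_of_mul_le_mul_left this hu

section Prod

variable {E₁ E₂ : Type*} [NormedAddCommGroup E₁] [InnerProductSpace ℝ E₁]
  [NormedAddCommGroup E₂] [InnerProductSpace ℝ E₂]

theorem norm_sub_le_of_subgradient_of_lipschitz_of_snd_eq_zero {Φ : E₁ → E₂ → ℝ}
    {gx : E₁ → E₂ → E₁} {gy : E₁ → E₂ → E₂} {yx : E₁ → E₂} {L : ℝ} (hL : 0 ≤ L)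
    (hsub : ∀ x y x' y', Φ x y + ⟪gx x y, x' - x⟫ + ⟪gy x y, y' - y⟫ ≤ Φ x' y')
    (hlip : ∀ x y x' y', √(‖gx x y - gx x' y'‖ ^ 2 + ‖gy x y - gy x' y'‖ ^ 2) ≤
      L * √(‖x - x'‖ ^ 2 + ‖y - y'‖ ^ 2))
    (hyx : ∀ x, gy x (yx x) = 0) (x x' : E₁) :
    ‖gx x' (yx x') - gx x (yx x)‖ ≤ L * ‖x' - x‖ := by
  let g : WithLp 2 (E₁ × E₂) → WithLp 2 (E₁ × E₂) := fun p =>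
    WithLp.toLp 2 (gx p.fst p.snd, gy p.fst p.snd)
  have hsub' : ∀ p q, Φ p.fst p.snd + ⟪g p, q - p⟫ ≤ Φ q.fst q.snd := fun p q =>
    (add_assoc _ _ _).symm.trans_le (hsub p.fst p.snd q.fst q.snd)
  have hlip' : ∀ p q, ‖g p - g q‖ ≤ L * ‖p - q‖ := fun p q => by
    rw [WithLp.prod_norm_eq_of_L2, WithLp.prod_norm_eq_of_L2]
    exact hlip p.fst p.snd q.fst q.snd
  have hcoco := sq_norm_sub_le_mul_inner_of_subgradient_of_lipschitz hsub' hlip'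
    (WithLp.toLp 2 (x, yx x)) (WithLp.toLp 2 (x', yx x'))
  have hg : ∀ z, g (WithLp.toLp 2 (z, yx z)) = WithLp.toLp 2 (gx z (yx z), 0) := fun z => by
    simp [g, hyx]
  rw [hg, hg, ← WithLp.toLp_sub, ← WithLp.toLp_sub, Prod.mk_sub_mk, Prod.mk_sub_mk, sub_zero,
    WithLp.norm_toLp_fst, WithLp.prod_inner_apply] at hcoco
  simp only [inner_zero_left, add_zero] at hcoco
  exact norm_le_mul_norm_of_sq_le_mul_inner hL hcoco

end Prod

theorem stmt_5_general {m n : ℕ} (F : EuclideanSpace ℝ (Fin m) → EuclideanSpace ℝ (Fin n) → ℝ)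
    (gx : EuclideanSpace ℝ (Fin m) → EuclideanSpace ℝ (Fin n) → EuclideanSpace ℝ (Fin m))
    (gy : EuclideanSpace ℝ (Fin m) → EuclideanSpace ℝ (Fin n) → EuclideanSpace ℝ (Fin n))
    (yx : EuclideanSpace ℝ (Fin m) → EuclideanSpace ℝ (Fin n))
    (gradf : EuclideanSpace ℝ (Fin m) → EuclideanSpace ℝ (Fin m))
    (L : ℝ) (hL : 0 ≤ L)
    (hgrad : ∀ x y, ∀ x' y',
      F x' y' ≥ F x y + ⟪gx x y, x' - x⟫ + ⟪gy x y, y' - y⟫)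
    (hlip : ∀ x y x' y',
      Real.sqrt (‖gx x y - gx x' y'‖ ^ 2 + ‖gy x y - gy x' y'‖ ^ 2) ≤
        L * Real.sqrt (‖x - x'‖ ^ 2 + ‖y - y'‖ ^ 2))
    (hopt : ∀ x, gy x (yx x) = 0)
    (hdanskin : ∀ x, gradf x = gx x (yx x)) :
    ∀ x x', ‖gradf x' - gradf x‖ ≤ L * ‖x' - x‖ := by
  intro x x'
  simpa only [hdanskin] using
    norm_sub_le_of_subgradient_of_lipschitz_of_snd_eq_zero hL hgrad hlip hopt x x'

/-- If `F(x,y)` is jointly convex with jointly `L`-Lipschitz gradient `(gx, gy)`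
(Euclidean product norm), the inner minimizer `yx x` satisfies `gy x (yx x) = 0`,
and `∇f(x) = gx x (yx x)` (Danskin), then `∇f` is `L`-Lipschitz. -/
theorem stmt_5 {m n : ℕ} (F : EuclideanSpace ℝ (Fin m) → EuclideanSpace ℝ (Fin n) → ℝ)
    (gx : EuclideanSpace ℝ (Fin m) → EuclideanSpace ℝ (Fin n) → EuclideanSpace ℝ (Fin m))
    (gy : EuclideanSpace ℝ (Fin m) → EuclideanSpace ℝ (Fin n) → EuclideanSpace ℝ (Fin n))
    (yx : EuclideanSpace ℝ (Fin m) → EuclideanSpace ℝ (Fin n))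
    (f : EuclideanSpace ℝ (Fin m) → ℝ)
    (gradf : EuclideanSpace ℝ (Fin m) → EuclideanSpace ℝ (Fin m))
    (L : ℝ) (hL : 0 ≤ L)
    (hconv : ConvexOn ℝ Set.univ (fun p : EuclideanSpace ℝ (Fin m) × EuclideanSpace ℝ (Fin n) => F p.1 p.2))
    (hgrad : ∀ x y, ∀ x' y',
      F x' y' ≥ F x y + ⟪gx x y, x' - x⟫ + ⟪gy x y, y' - y⟫)
    (hlip : ∀ x y x' y',
      Real.sqrt (‖gx x y - gx x' y'‖ ^ 2 + ‖gy x y - gy x' y'‖ ^ 2) ≤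
        L * Real.sqrt (‖x - x'‖ ^ 2 + ‖y - y'‖ ^ 2))
    (hmin : ∀ x y, F x (yx x) ≤ F x y)
    (hopt : ∀ x, gy x (yx x) = 0)
    (hf : ∀ x, f x = F x (yx x))
    (hdanskin : ∀ x, gradf x = gx x (yx x)) :
    ∀ x x', ‖gradf x' - gradf x‖ ≤ L * ‖x' - x‖ :=
  stmt_5_general F gx gy yx gradf L hL hgrad hlip hopt hdanskin
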